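/- arXiv:2501.07205 — 5 statements merged into one kernel-verified Lean document; each statement's English description precedes it below -/
import Mathlib

section
/- The point e_F = (1, b(σ)σ) is an equilibrium of the planar dynamical system (DS): m' = i·m(1−m), i' = δ⁻¹f(m,i), i.e. both right-hand sides vanish there. Moreover the Jacobian matrix of the vector field at e_F is lower triangular with diagonal entries −b(σ)σ and −a(σ)/(α₂δ); in particular both eigenvalues of the Jacobian are real and strictly negative, so e_F is a hyperbolic stable node. -/
noncomputable def sigmaP (α₂ β₁ β₂ : ℝ) : ℝ := α₂ / (β₁ * β₂)

noncomputable def aP (α₂ β₁ β₂ : ℝ) : ℝ := β₁ * (β₂ * sigmaP α₂ β₁ β₂ + α₂)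

noncomputable def bP (α₂ β₁ β₂ : ℝ) : ℝ := β₂ / (β₂ * sigmaP α₂ β₁ β₂ + α₂)

/-- The reduced reaction function `f(M,I)`. -/
noncomputable def fP (α₂ β₁ β₂ M I : ℝ) : ℝ :=
  aP α₂ β₁ β₂ * I * (bP α₂ β₁ β₂ * (sigmaP α₂ β₁ β₂ - 1) + bP α₂ β₁ β₂ * M - I) /
    (α₂ * I + β₂ * (1 - M))

section Parameters

variable {α₂ β₁ β₂ : ℝ}

theorem sigmaP_pos (hα₂ : 0 < α₂) (hβ₁ : 0 < β₁) (hβ₂ : 0 < β₂) : 0 < sigmaP α₂ β₁ β₂ :=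
  div_pos hα₂ (mul_pos hβ₁ hβ₂)

theorem aP_pos (hα₂ : 0 < α₂) (hβ₁ : 0 < β₁) (hβ₂ : 0 < β₂) : 0 < aP α₂ β₁ β₂ := by
  have := sigmaP_pos hα₂ hβ₁ hβ₂
  unfold aP
  positivity

theorem bP_pos (hα₂ : 0 < α₂) (hβ₁ : 0 < β₁) (hβ₂ : 0 < β₂) : 0 < bP α₂ β₁ β₂ := by
  have := sigmaP_pos hα₂ hβ₁ hβ₂
  unfold bP
  positivity

end Parameters

section ReactionAtMOne

variable (α₂ β₁ β₂ : ℝ)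

theorem fP_one_bP_mul_sigmaP : fP α₂ β₁ β₂ 1 (bP α₂ β₁ β₂ * sigmaP α₂ β₁ β₂) = 0 := by
  have hnum : bP α₂ β₁ β₂ * (sigmaP α₂ β₁ β₂ - 1) + bP α₂ β₁ β₂ * 1 -
      bP α₂ β₁ β₂ * sigmaP α₂ β₁ β₂ = 0 := by ring
  rw [fP, hnum, mul_zero, zero_div]

-- For `α₂ = 0` both sides are the junk value `x / 0 = 0`.
theorem fP_one_of_ne_zero {I : ℝ} (hI : I ≠ 0) :
    fP α₂ β₁ β₂ 1 I = aP α₂ β₁ β₂ * (bP α₂ β₁ β₂ * sigmaP α₂ β₁ β₂ - I) / α₂ := by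
  have hnum : bP α₂ β₁ β₂ * (sigmaP α₂ β₁ β₂ - 1) + bP α₂ β₁ β₂ * 1 - I =
      bP α₂ β₁ β₂ * sigmaP α₂ β₁ β₂ - I := by ring
  unfold fP
  rw [hnum, sub_self, mul_zero, add_zero, mul_right_comm _ I, mul_div_mul_right _ _ hI]

theorem hasDerivAt_fP_one {I : ℝ} (hI : I ≠ 0) :
    HasDerivAt (fun i => fP α₂ β₁ β₂ 1 i) (-(aP α₂ β₁ β₂ / α₂)) I := by
  have hlin : HasDerivAt (fun i => aP α₂ β₁ β₂ * (bP α₂ β₁ β₂ * sigmaP α₂ β₁ β₂ - i) / α₂)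
      (-(aP α₂ β₁ β₂ / α₂)) I := by
    simpa [neg_div] using (((hasDerivAt_id I).const_sub _).const_mul (aP α₂ β₁ β₂)).div_const α₂
  refine hlin.congr_of_eventuallyEq ?_
  filter_upwards [eventually_ne_nhds hI] with i hi
  exact fP_one_of_ne_zero α₂ β₁ β₂ hi

end ReactionAtMOne

theorem hasDerivAt_logistic (c x : ℝ) :
    HasDerivAt (fun m => c * m * (1 - m)) (c * (1 - 2 * x)) x := by
  have := ((hasDerivAt_id x).const_mul c).mul ((hasDerivAt_id x).const_sub 1)
  simp only [id, mul_one, mul_neg] at this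
  exact this.congr_deriv (by ring)

/-- The point `e_F = (1, b(σ)σ)` is an equilibrium of the planar system (DS)
`m' = i m (1-m)`, `i' = δ⁻¹ f(m,i)`; the Jacobian there is lower triangular with
diagonal entries `-b(σ)σ` and `-a(σ)/(α₂ δ)`, both strictly negative, so `e_F` is a
hyperbolic stable node. -/
theorem eF_hyperbolic_stable_node (α₂ β₁ β₂ δ : ℝ)
    (hα₂ : 0 < α₂) (hβ₁ : 0 < β₁) (hβ₂ : 0 < β₂) (hδ : 0 < δ) :
    let σ := sigmaP α₂ β₁ β₂
    let a := aP α₂ β₁ β₂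
    let b := bP α₂ β₁ β₂
    let g₁ : ℝ → ℝ → ℝ := fun m i => i * m * (1 - m)
    let g₂ : ℝ → ℝ → ℝ := fun m i => δ⁻¹ * fP α₂ β₁ β₂ m i
    -- e_F is an equilibrium
    g₁ 1 (b * σ) = 0 ∧ g₂ 1 (b * σ) = 0 ∧
    -- the Jacobian at e_F is lower triangular: ∂g₁/∂i = 0 there
    HasDerivAt (fun i => g₁ 1 i) 0 (b * σ) ∧
    -- diagonal entries of the Jacobian at e_F
    HasDerivAt (fun m => g₁ m (b * σ)) (-(b * σ)) 1 ∧
    HasDerivAt (fun i => g₂ 1 i) (-(a / (α₂ * δ))) (b * σ) ∧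
    -- both (real) eigenvalues are strictly negative
    (-(b * σ) < 0) ∧ (-(a / (α₂ * δ)) < 0) := by
  intro σ a b g₁ g₂
  have hbσ : 0 < b * σ := mul_pos (bP_pos hα₂ hβ₁ hβ₂) (sigmaP_pos hα₂ hβ₁ hβ₂)
  have ha : 0 < a / (α₂ * δ) := div_pos (aP_pos hα₂ hβ₁ hβ₂) (mul_pos hα₂ hδ)
  refine ⟨by simp [g₁], mul_eq_zero_of_right _ (fP_one_bP_mul_sigmaP α₂ β₁ β₂), ?_, ?_, ?_, by linarith, by linarith⟩
  · simpa [g₁] using hasDerivAt_const (b * σ) (0 : ℝ)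
  · exact (hasDerivAt_logistic (b * σ) 1).congr_deriv (by ring)
  · exact ((hasDerivAt_fP_one α₂ β₁ β₂ hbσ.ne').const_mul δ⁻¹).congr_deriv (by ring)
end

section
/- For every m_e ∈ [0,1), the point (m_e, 0) is an equilibrium of the planar dynamical system (DS): m' = i·m(1−m), i' = δ⁻¹f(m,i), and the Jacobian matrix of the vector field at (m_e, 0) is upper triangular with eigenvalues 0 and δ⁻¹β₁(m_e − (1−σ))/(1−m_e). In particular, the nonzero eigenvalue is strictly negative for m_e ∈ [0, 1−σ) and strictly positive for m_e ∈ (1−σ, 1) (so these equilibria form a continuum of degenerate nodes, stable for m_e < 1−σ and unstable for m_e > 1−σ). -/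
/-! Since `f(m, 0) = 0` for every `m`, the points `(m, 0)` are equilibria and `∂f/∂m` vanishes
there. Along `i`, `f(m, ·)` has the shape `a i (k - i) / (α₂ i + β₂ (1 - m))`, whose slope at
`i = 0` is `a k / (β₂ (1 - m))`; with `k = b (σ - 1 + m)` and `a b = β₁ β₂` this is
`β₁ (m - (1 - σ)) / (1 - m)`, whose sign is that of `m - (1 - σ)`. -/

theorem hasDerivAt_mul_sub_div_zero {c k p q : ℝ} (hq : q ≠ 0) :
    HasDerivAt (fun x => c * x * (k - x) / (p * x + q)) (c * k / q) 0 := by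
  have hnum : HasDerivAt (fun x => c * x * (k - x)) (c * 1 * (k - 0) + c * 0 * (0 - 1)) 0 :=
    ((hasDerivAt_id 0).const_mul c).mul ((hasDerivAt_const 0 k).sub (hasDerivAt_id 0))
  have hden : HasDerivAt (fun x => p * x + q) (p * 1) 0 :=
    ((hasDerivAt_id 0).const_mul p).add_const q
  refine (hnum.div hden (by simpa using hq)).congr_deriv ?_
  simp only [mul_zero, zero_mul, zero_add, sub_zero, mul_one, add_zero]
  field_simp

section Parameters

variable {α₂ β₁ β₂ : ℝ}

theorem aP_mul_bP (h : β₂ * sigmaP α₂ β₁ β₂ + α₂ ≠ 0) :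
    aP α₂ β₁ β₂ * bP α₂ β₁ β₂ = β₁ * β₂ := by
  unfold aP bP
  field_simp

theorem fP_zero_right (M : ℝ) : fP α₂ β₁ β₂ M 0 = 0 := by
  simp [fP]

theorem hasDerivAt_fP_zero (hα₂ : 0 < α₂) (hβ₁ : 0 < β₁) (hβ₂ : 0 < β₂) {M : ℝ} (hM : M < 1) :
    HasDerivAt (fP α₂ β₁ β₂ M) (β₁ * (M - (1 - sigmaP α₂ β₁ β₂)) / (1 - M)) 0 := by
  have hσ := sigmaP_pos hα₂ hβ₁ hβ₂
  have hab := aP_mul_bP (α₂ := α₂) (β₁ := β₁) (β₂ := β₂) (by positivity)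
  have hq : β₂ * (1 - M) ≠ 0 := (mul_pos hβ₂ (sub_pos.2 hM)).ne'
  refine (hasDerivAt_mul_sub_div_zero (p := α₂) hq).congr_deriv ?_
  rw [div_eq_div_iff hq (sub_pos.2 hM).ne']
  linear_combination (1 - M) * (sigmaP α₂ β₁ β₂ - 1 + M) * hab

end Parameters

/-- For every `m_e ∈ [0,1)`, the point `(m_e, 0)` is an equilibrium of the planar system
(DS) `m' = i m (1-m)`, `i' = δ⁻¹ f(m,i)`; the Jacobian there is upper triangular with
eigenvalues `0` and `δ⁻¹ β₁ (m_e - (1-σ))/(1-m_e)`, the latter being strictly negative for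
`m_e < 1-σ` and strictly positive for `m_e > 1-σ`. -/
theorem continuum_of_degenerate_nodes (α₂ β₁ β₂ δ : ℝ)
    (hα₂ : 0 < α₂) (hβ₁ : 0 < β₁) (hβ₂ : 0 < β₂) (hδ : 0 < δ)
    (me : ℝ) (hme : me ∈ Set.Ico (0 : ℝ) 1) :
    let σ := sigmaP α₂ β₁ β₂
    let g₁ : ℝ → ℝ → ℝ := fun m i => i * m * (1 - m)
    let g₂ : ℝ → ℝ → ℝ := fun m i => δ⁻¹ * fP α₂ β₁ β₂ m i
    let lam := δ⁻¹ * β₁ * (me - (1 - σ)) / (1 - me)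
    -- (m_e, 0) is an equilibrium
    g₁ me 0 = 0 ∧ g₂ me 0 = 0 ∧
    -- the Jacobian at (m_e, 0) is upper triangular: ∂g₂/∂m = 0 there
    HasDerivAt (fun m => g₂ m 0) 0 me ∧
    -- the diagonal entries (eigenvalues) are 0 and δ⁻¹ β₁ (m_e - (1-σ))/(1-m_e)
    HasDerivAt (fun m => g₁ m 0) 0 me ∧
    HasDerivAt (fun i => g₂ me i) lam 0 ∧
    -- the nonzero eigenvalue is negative for m_e < 1-σ and positive for m_e > 1-σ
    (me < 1 - σ → lam < 0) ∧ (1 - σ < me → 0 < lam) := by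
  obtain ⟨-, hme1⟩ := hme
  intro σ g₁ g₂ lam
  have h1me : 0 < 1 - me := sub_pos.2 hme1
  have hg₂ : ∀ m, g₂ m 0 = 0 := fun m => by simp only [g₂, fP_zero_right, mul_zero]
  refine ⟨by simp only [g₁, zero_mul], hg₂ me, ?_, ?_, ?_, fun h => ?_, fun h => ?_⟩
  · simpa only [hg₂] using hasDerivAt_const me (0 : ℝ)
  · simpa only [g₁, zero_mul] using hasDerivAt_const me (0 : ℝ)
  · refine ((hasDerivAt_fP_zero hα₂ hβ₁ hβ₂ hme1).const_mul δ⁻¹).congr_deriv ?_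
    simp only [lam, σ]
    ring
  · exact div_neg_of_neg_of_pos (mul_neg_of_pos_of_neg (by positivity) (by linarith)) h1me
  · exact div_pos (mul_pos (by positivity) (by linarith)) h1me
end

section
/- (Proposition 4.1) Let 0 < δ ≤ σ ≤ 1 and let (M_T, I_T) be an FPTW with speed v > 0. Then M_T(z) > 0 and I_T(z) > 0 for all z ∈ ℝ. -/
/-- A full transition permanent form travelling wave ([FPTW]) with speed `v`:
a pair of C² profiles with values in `[0,1]²`, satisfying the travelling-wave ODEs
`M'' + v M' + I M (1 - M) = 0` and `δ (D I'' + v I') + f(M, I) = 0`, connecting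
the fully saturated state `(1, b(σ)σ)` at `-∞` to the zero state `(0,0)` at `+∞`. -/
structure IsFPTW (α₂ β₁ β₂ δ D v : ℝ) (M I : ℝ → ℝ) : Prop where
  smoothM : ContDiff ℝ 2 M
  smoothI : ContDiff ℝ 2 I
  rangeM : ∀ z, M z ∈ Set.Icc (0 : ℝ) 1
  rangeI : ∀ z, I z ∈ Set.Icc (0 : ℝ) 1
  odeM : ∀ z, deriv (deriv M) z + v * deriv M z + I z * M z * (1 - M z) = 0
  odeI : ∀ z, δ * (D * deriv (deriv I) z + v * deriv I z) + fP α₂ β₁ β₂ (M z) (I z) = 0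
  limM_top : Filter.Tendsto M Filter.atTop (nhds 0)
  limI_top : Filter.Tendsto I Filter.atTop (nhds 0)
  limM_bot : Filter.Tendsto M Filter.atBot (nhds 1)
  limI_bot : Filter.Tendsto I Filter.atBot (nhds (bP α₂ β₁ β₂ * sigmaP α₂ β₁ β₂))

open Set Filter Topology

theorem linear_ode2_eq_zero_of_eq_zero_of_deriv_eq_zero {p c y : ℝ → ℝ}
    (hp : Continuous p) (hc : Continuous c) (hy : ContDiff ℝ 2 y)
    (hode : ∀ t, deriv (deriv y) t + p t * deriv y t + c t * y t = 0) {t₀ : ℝ}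
    (h₀ : y t₀ = 0) (h₁ : deriv y t₀ = 0) (t : ℝ) : y t = 0 := by
  open ContinuousLinearMap in
  let A : ℝ → ℝ × ℝ →L[ℝ] ℝ × ℝ := fun s =>
    inl ℝ ℝ ℝ ∘L snd ℝ ℝ ℝ - p s • (inr ℝ ℝ ℝ ∘L snd ℝ ℝ ℝ) - c s • (inr ℝ ℝ ℝ ∘L fst ℝ ℝ ℝ)
  have hA : Continuous A := by fun_prop
  obtain ⟨a, b, ht, ht₀⟩ : ∃ a b, t ∈ Ioo a b ∧ t₀ ∈ Ioo a b :=
    ⟨min t t₀ - 1, max t t₀ + 1, by grind, by grind⟩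
  obtain ⟨K, hK⟩ := (isCompact_Icc (a := a) (b := b)).bddAbove_image hA.nnnorm.continuousOn
  have hsol (s : ℝ) : HasDerivAt (fun s => (y s, deriv y s)) (A s (y s, deriv y s)) s := by
    convert (hy.differentiable two_ne_zero s).hasDerivAt.prodMk
      (hy.differentiable_deriv_two s).hasDerivAt using 1
    simp only [A, sub_apply, ContinuousLinearMap.comp_apply,
      ContinuousLinearMap.coe_snd', ContinuousLinearMap.coe_fst', ContinuousLinearMap.inl_apply,
      ContinuousLinearMap.inr_apply, smul_apply, Prod.smul_mk, smul_eq_mul,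
      mul_zero, Prod.mk_sub_mk, sub_zero, zero_sub, Prod.mk.injEq, true_and]
    linarith [hode s]
  have hzero (s : ℝ) : HasDerivAt (fun _ => (0 : ℝ × ℝ)) (A s 0) s := by
    simpa using hasDerivAt_const s (0 : ℝ × ℝ)
  exact congrArg Prod.fst <| ODE_solution_unique_of_mem_Ioo (s := fun _ => univ) (K := K)
    (fun s hs => ((A s).lipschitz.weaken (hK ⟨s, Ioo_subset_Icc_self hs, rfl⟩)).lipschitzOnWith)
    ht₀ (fun s _ => ⟨hsol s, trivial⟩) (fun s _ => ⟨hzero s, trivial⟩) (by simp [h₀, h₁]) ht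

theorem linear_ode2_pos_of_nonneg {p c y : ℝ → ℝ}
    (hp : Continuous p) (hc : Continuous c) (hy : ContDiff ℝ 2 y)
    (hode : ∀ t, deriv (deriv y) t + p t * deriv y t + c t * y t = 0)
    (hnn : ∀ t, 0 ≤ y t) (hne : ∃ t, y t ≠ 0) (t : ℝ) : 0 < y t := by
  refine (hnn t).lt_of_ne' fun h₀ => ?_
  have hmin : IsLocalMin y t := Eventually.of_forall fun s => h₀ ▸ hnn s
  obtain ⟨s, hs⟩ := hne
  exact hs (linear_ode2_eq_zero_of_eq_zero_of_deriv_eq_zero hp hc hy hode h₀ hmin.deriv_eq_zero s)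

theorem fP_eq_mul (α₂ β₁ β₂ M I : ℝ) :
    fP α₂ β₁ β₂ M I = I * (aP α₂ β₁ β₂ *
      (bP α₂ β₁ β₂ * (sigmaP α₂ β₁ β₂ - 1) + bP α₂ β₁ β₂ * M - I) / (α₂ * I + β₂ * (1 - M))) := by
  unfold fP
  ring

namespace IsFPTW

variable {α₂ β₁ β₂ δ D v : ℝ} {M I : ℝ → ℝ}

theorem M_lt_one (h : IsFPTW α₂ β₁ β₂ δ D v M I) (z : ℝ) : M z < 1 := by
  have hd : deriv (fun t => 1 - M t) = fun t => -deriv M t := funext fun t => deriv_const_sub 1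
  have hode (t : ℝ) : deriv (deriv (fun t => 1 - M t)) t + v * deriv (fun t => 1 - M t) t
      + -(I t * M t) * (1 - M t) = 0 := by
    simp only [hd, deriv.fun_neg]
    linarith [h.odeM t]
  have hlim : Tendsto (fun t => 1 - M t) atTop (𝓝 1) := by
    simpa using tendsto_const_nhds.sub h.limM_top
  exact sub_pos.1 <| linear_ode2_pos_of_nonneg continuous_const
    (h.smoothI.continuous.mul h.smoothM.continuous).neg (contDiff_const.sub h.smoothM) hode
    (fun t => sub_nonneg.2 (h.rangeM t).2) (hlim.eventually_ne one_ne_zero).exists z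

theorem M_pos (h : IsFPTW α₂ β₁ β₂ δ D v M I) (z : ℝ) : 0 < M z :=
  linear_ode2_pos_of_nonneg (p := fun _ => v) (c := fun t => I t * (1 - M t)) continuous_const
    (h.smoothI.continuous.mul (continuous_const.sub h.smoothM.continuous)) h.smoothM
    (fun t => by linarith [h.odeM t]) (fun t => (h.rangeM t).1)
    (h.limM_bot.eventually_ne one_ne_zero).exists z

theorem I_pos (hα₂ : 0 < α₂) (hβ₁ : 0 < β₁) (hβ₂ : 0 < β₂) (hδ : δ ≠ 0) (hD : D ≠ 0)
    (h : IsFPTW α₂ β₁ β₂ δ D v M I) (z : ℝ) : 0 < I z := by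
  set q : ℝ → ℝ := fun t => aP α₂ β₁ β₂ *
      (bP α₂ β₁ β₂ * (sigmaP α₂ β₁ β₂ - 1) + bP α₂ β₁ β₂ * M t - I t) /
      (α₂ * I t + β₂ * (1 - M t))
  have hden (t : ℝ) : α₂ * I t + β₂ * (1 - M t) ≠ 0 := by
    have := mul_nonneg hα₂.le (h.rangeI t).1
    nlinarith [h.M_lt_one t]
  have hM := h.smoothM.continuous
  have hI := h.smoothI.continuous
  have hq : Continuous q :=
    (by fun_prop : Continuous _).div (by fun_prop) hden
  have hode (t : ℝ) : deriv (deriv I) t + v / D * deriv I t + q t / (δ * D) * I t = 0 := by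
    have hodeI := h.odeI t
    rw [fP_eq_mul] at hodeI
    field_simp
    linear_combination hodeI
  have hbσ : bP α₂ β₁ β₂ * sigmaP α₂ β₁ β₂ ≠ 0 := by
    unfold bP sigmaP
    positivity
  exact linear_ode2_pos_of_nonneg continuous_const (hq.div_const _) h.smoothI hode
    (fun t => (h.rangeI t).1) (h.limI_bot.eventually_ne hbσ).exists z

end IsFPTW

theorem fptw_positive_general (α₂ β₁ β₂ δ D v : ℝ)
    (hα₂ : 0 < α₂) (hβ₁ : 0 < β₁) (hβ₂ : 0 < β₂) (hD : 0 < D)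
    (hδ : 0 < δ) (M I : ℝ → ℝ) (h : IsFPTW α₂ β₁ β₂ δ D v M I) :
    ∀ z : ℝ, 0 < M z ∧ 0 < I z :=
  fun z => ⟨h.M_pos z, h.I_pos hα₂ hβ₁ hβ₂ hδ.ne' hD.ne' z⟩

/-- Proposition 4.1: an [FPTW] has strictly positive components everywhere. -/
theorem fptw_positive (α₂ β₁ β₂ δ D v : ℝ)
    (hα₂ : 0 < α₂) (hβ₁ : 0 < β₁) (hβ₂ : 0 < β₂) (hD : 0 < D)
    (hδ : 0 < δ) (hδσ : δ ≤ sigmaP α₂ β₁ β₂) (hσ : sigmaP α₂ β₁ β₂ ≤ 1)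
    (hv : 0 < v) (M I : ℝ → ℝ) (h : IsFPTW α₂ β₁ β₂ δ D v M I) :
    ∀ z : ℝ, 0 < M z ∧ 0 < I z :=
  fptw_positive_general α₂ β₁ β₂ δ D v hα₂ hβ₁ hβ₂ hD hδ M I h
end

section
/- Let b > 0 and v = √(b/2). Then the function M(z) = exp(−vz)/(1 + exp(−vz)) satisfies M''(z) + v M'(z) + b M(z)²(1 − M(z)) = 0 for all z ∈ ℝ; moreover M(z) ∈ (0,1) for all z, M is strictly monotone decreasing, M(0) = 1/2, M(z) → 1 as z → −∞ and M(z) → 0 as z → +∞. -/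
/-!
The wave is the logistic sigmoid `σ(-v z)`. Since `σ' = σ (1 - σ)`, the profile `M(z) = σ(c z)`
satisfies `M' = c M (1 - M)` and `M'' = c² M (1 - M) (1 - 2M)`; for `c = -v` the three terms of
`M'' + v M' + 2v² M² (1 - M)` then cancel inside the common factor `v² M (1 - M)`, and
`b = 2v²` is exactly the choice `v = √(b/2)`. The remaining properties are those of `σ`.
-/

open Real Filter

namespace Real

lemma exp_div_one_add_exp (x : ℝ) : exp x / (1 + exp x) = sigmoid x := by
  rw [sigmoid_def, exp_neg]
  field_simp
  ring

section ScaledSigmoid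

variable (c : ℝ)

lemma hasDerivAt_sigmoid_const_mul (z : ℝ) :
    HasDerivAt (fun z => sigmoid (c * z)) (c * (sigmoid (c * z) * (1 - sigmoid (c * z)))) z :=
  ((hasDerivAt_sigmoid (c * z)).comp z ((hasDerivAt_id' z).const_mul c)).congr_deriv (by ring)

lemma deriv_sigmoid_const_mul :
    deriv (fun z => sigmoid (c * z)) = fun z => c * (sigmoid (c * z) * (1 - sigmoid (c * z))) :=
  funext fun z => (hasDerivAt_sigmoid_const_mul c z).deriv

lemma deriv_deriv_sigmoid_const_mul (z : ℝ) :
    deriv (deriv fun z => sigmoid (c * z)) z =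
      c ^ 2 * sigmoid (c * z) * (1 - sigmoid (c * z)) * (1 - 2 * sigmoid (c * z)) := by
  have h := hasDerivAt_sigmoid_const_mul c z
  rw [deriv_sigmoid_const_mul]
  exact ((h.fun_mul (h.const_sub 1)).const_mul c).deriv.trans (by ring)

end ScaledSigmoid

lemma sigmoid_neg_mul_cubic_fisher (v z : ℝ) :
    deriv (deriv fun z => sigmoid (-v * z)) z + v * deriv (fun z => sigmoid (-v * z)) z
      + 2 * v ^ 2 * sigmoid (-v * z) ^ 2 * (1 - sigmoid (-v * z)) = 0 := by
  rw [deriv_deriv_sigmoid_const_mul, deriv_sigmoid_const_mul]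
  ring

section DecreasingWave

variable {v : ℝ}

lemma strictAnti_sigmoid_neg_mul (hv : 0 < v) : StrictAnti fun z => sigmoid (-v * z) :=
  fun _ _ hab => sigmoid_lt (by nlinarith)

lemma tendsto_sigmoid_neg_mul_atBot (hv : 0 < v) :
    Tendsto (fun z => sigmoid (-v * z)) atBot (nhds 1) :=
  tendsto_sigmoid_atTop.comp ((tendsto_const_mul_atTop_of_neg (neg_neg_of_pos hv)).2 tendsto_id)

lemma tendsto_sigmoid_neg_mul_atTop (hv : 0 < v) :
    Tendsto (fun z => sigmoid (-v * z)) atTop (nhds 0) :=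
  tendsto_sigmoid_atBot.comp ((tendsto_const_mul_atBot_of_neg (neg_neg_of_pos hv)).2 tendsto_id)

end DecreasingWave

end Real

/-- The explicit minimum-speed travelling wave of the cubic Fisher equation:
`M(z) = exp(-vz)/(1 + exp(-vz))` with `v = √(b/2)` satisfies
`M'' + v M' + b M²(1-M) = 0`, takes values in `(0,1)`, is strictly decreasing, has
`M(0) = 1/2`, and tends to `1` at `-∞` and to `0` at `+∞`. -/
theorem cubic_fisher_explicit_wave (b : ℝ) (hb : 0 < b) :
    let v := Real.sqrt (b / 2)
    let M : ℝ → ℝ := fun z => Real.exp (-v * z) / (1 + Real.exp (-v * z))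
    (∀ z, deriv (deriv M) z + v * deriv M z + b * (M z) ^ 2 * (1 - M z) = 0) ∧
    (∀ z, M z ∈ Set.Ioo (0 : ℝ) 1) ∧
    StrictAnti M ∧
    M 0 = 1 / 2 ∧
    Filter.Tendsto M Filter.atBot (nhds 1) ∧
    Filter.Tendsto M Filter.atTop (nhds 0) := by
  intro v M
  have hv : 0 < v := Real.sqrt_pos.mpr (by linarith)
  have hb_eq : b = 2 * v ^ 2 := by rw [Real.sq_sqrt (by linarith)]; ring
  have hM : M = fun z => sigmoid (-v * z) := funext fun z => exp_div_one_add_exp (-v * z)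
  rw [hM, hb_eq]
  refine ⟨sigmoid_neg_mul_cubic_fisher v, fun z => ⟨sigmoid_pos _, sigmoid_lt_one _⟩,
    strictAnti_sigmoid_neg_mul hv, ?_, tendsto_sigmoid_neg_mul_atBot hv,
    tendsto_sigmoid_neg_mul_atTop hv⟩
  norm_num [sigmoid_zero]
end

section
/- (Proposition 4.4) Let σ > 1 and let (M_T, I_T) be an LPTW with speed v > 0. Then M_T(z) = 0 and I_T(z) > 0 for all z ∈ ℝ. -/
/-- A lower transition permanent form travelling wave ([LPTW]) with speed `v`:
a pair of C² profiles with values in `[0,1]²`, satisfying the travelling-wave ODEs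
`M'' + v M' + I M (1 - M) = 0` and `δ (D I'' + v I') + f(M, I) = 0`, connecting
the transitional state `(0, b(σ)(σ-1))` at `-∞` to the zero state `(0,0)` at `+∞`. -/
structure IsLPTW (α₂ β₁ β₂ δ D v : ℝ) (M I : ℝ → ℝ) : Prop where
  smoothM : ContDiff ℝ 2 M
  smoothI : ContDiff ℝ 2 I
  rangeM : ∀ z, M z ∈ Set.Icc (0 : ℝ) 1
  rangeI : ∀ z, I z ∈ Set.Icc (0 : ℝ) 1
  odeM : ∀ z, deriv (deriv M) z + v * deriv M z + I z * M z * (1 - M z) = 0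
  odeI : ∀ z, δ * (D * deriv (deriv I) z + v * deriv I z) + fP α₂ β₁ β₂ (M z) (I z) = 0
  limM_top : Filter.Tendsto M Filter.atTop (nhds 0)
  limI_top : Filter.Tendsto I Filter.atTop (nhds 0)
  limM_bot : Filter.Tendsto M Filter.atBot (nhds 0)
  limI_bot : Filter.Tendsto I Filter.atBot (nhds (bP α₂ β₁ β₂ * (sigmaP α₂ β₁ β₂ - 1)))

/-
Since `(e^{vz} M')' = -e^{vz} I M (1 - M) ≤ 0`, the weighted slope `e^{vz} M'` is nonincreasing.
For `v ≥ 0` a single point `z₁` with `M'(z₁) > 0` would then force `M' ≥ M'(z₁)` on `(-∞, z₁]`,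
which is impossible for a bounded `M`; so `M` is nonincreasing and is squeezed between `0` and its
limit `0` at `-∞`. With `M ≡ 0` the `I`-equation is linear, `I'' = -(v/D) I' + φ(I) I` with
`φ` bounded on `[0,1]`. A zero of `I ≥ 0` is a minimum, so `I = I' = 0` there, and uniqueness for
this linear equation gives `I ≡ 0`, contradicting `I → b(σ)(σ-1) > 0` at `-∞`.
-/

open Real Set Filter

section SecondOrder

variable {y : ℝ → ℝ}

theorem antitone_exp_mul_deriv {v : ℝ} (hy' : Differentiable ℝ (deriv y))
    (h : ∀ z, deriv (deriv y) z + v * deriv y z ≤ 0) :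
    Antitone fun z => exp (v * z) * deriv y z := by
  have hderiv : ∀ z, HasDerivAt (fun z => exp (v * z) * deriv y z)
      (exp (v * z) * (deriv (deriv y) z + v * deriv y z)) z := fun z => by
    have := (((hasDerivAt_id z).const_mul v).exp).mul (hy' z).hasDerivAt
    exact this.congr_deriv (by simp only [id]; ring)
  refine antitone_of_deriv_nonpos (fun z => (hderiv z).differentiableAt) fun z => ?_
  rw [(hderiv z).deriv]
  exact mul_nonpos_of_nonneg_of_nonpos (exp_pos _).le (h z)

theorem deriv_le_deriv_of_le {v : ℝ} (hv : 0 ≤ v) (hy' : Differentiable ℝ (deriv y))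
    (h : ∀ z, deriv (deriv y) z + v * deriv y z ≤ 0) {z z₁ : ℝ} (hz : z ≤ z₁)
    (hpos : 0 ≤ deriv y z₁) : deriv y z₁ ≤ deriv y z := by
  have hweighted := antitone_exp_mul_deriv hy' h hz
  have hexp : exp (v * z) ≤ exp (v * z₁) := exp_le_exp.mpr (mul_le_mul_of_nonneg_left hz hv)
  refine le_of_mul_le_mul_left ?_ (exp_pos (v * z))
  calc exp (v * z) * deriv y z₁ ≤ exp (v * z₁) * deriv y z₁ :=
        mul_le_mul_of_nonneg_right hexp hpos
    _ ≤ exp (v * z) * deriv y z := hweighted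

theorem not_bddBelow_of_pos_le_deriv {ε z₁ : ℝ} (hε : 0 < ε) (hy : Differentiable ℝ y)
    (h : ∀ z ≤ z₁, ε ≤ deriv y z) : ¬ BddBelow (range y) := by
  rintro ⟨m, hm⟩
  have hslope := (convex_Iic z₁).mul_sub_le_image_sub_of_le_deriv hy.continuous.continuousOn
    hy.differentiableOn (fun x hx => h x (interior_subset hx : x ∈ Iic z₁))
  set z := z₁ - (y z₁ - m + 1) / ε
  have hz : z ≤ z₁ := by
    have : m ≤ y z₁ := hm (mem_range_self z₁)
    have : 0 ≤ (y z₁ - m + 1) / ε := by positivity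
    linarith
  have := hslope z hz z₁ self_mem_Iic hz
  have : ε * (z₁ - z) = y z₁ - m + 1 := by simp only [z]; field_simp; ring
  linarith [hm (mem_range_self z)]

theorem antitone_of_deriv_deriv_add_mul_deriv_nonpos {v : ℝ} (hv : 0 ≤ v)
    (hy : Differentiable ℝ y) (hy' : Differentiable ℝ (deriv y))
    (h : ∀ z, deriv (deriv y) z + v * deriv y z ≤ 0) (hbdd : BddBelow (range y)) :
    Antitone y := by
  refine antitone_of_deriv_nonpos hy fun z₁ => not_lt.mp fun hpos => ?_
  exact not_bddBelow_of_pos_le_deriv hpos hy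
    (fun z hz => deriv_le_deriv_of_le hv hy' h hz hpos.le) hbdd

theorem eq_zero_of_deriv_deriv_eq_linear {q : ℝ → ℝ} {p C : ℝ} (hy : Differentiable ℝ y)
    (hy' : Differentiable ℝ (deriv y)) (hq : ∀ t, |q t| ≤ C)
    (hode : ∀ t, deriv (deriv y) t = p * deriv y t + q t * y t) {t₀ : ℝ} (h₀ : y t₀ = 0)
    (h₁ : deriv y t₀ = 0) : y = 0 := by
  set V : ℝ → ℝ × ℝ → ℝ × ℝ := fun t x => (x.2, p * x.2 + q t * x.1)
  have hlip : ∀ t, LipschitzWith (max 1 (‖p‖₊ + C.toNNReal)) (V t) := fun t => by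
    have hqt : ‖q t‖₊ ≤ C.toNNReal := by
      rw [Real.le_toNNReal_iff_coe_le ((abs_nonneg _).trans (hq t)), coe_nnnorm]
      exact hq t
    have := (LipschitzWith.prod_snd (α := ℝ) (β := ℝ)).prodMk
      (((lipschitzWith_smul (β := ℝ) p).comp LipschitzWith.prod_snd).add
        ((lipschitzWith_smul (β := ℝ) (q t)).comp LipschitzWith.prod_fst))
    refine this.weaken (max_le_max le_rfl ?_)
    simpa only [mul_one] using add_le_add_right hqt _
  have hsol : ∀ t, HasDerivAt (fun t => (y t, deriv y t)) (V t (y t, deriv y t)) t := fun t =>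
    ((hy t).hasDerivAt.prodMk (hy' t).hasDerivAt).congr_deriv (by rw [hode t])
  have hzero : ∀ t, HasDerivAt (fun _ => ((0 : ℝ), (0 : ℝ))) (V t (0, 0)) t := fun t =>
    (hasDerivAt_const t ((0 : ℝ), (0 : ℝ))).congr_deriv (by simp [V]; rfl)
  have := ODE_solution_unique_univ (s := fun _ => univ) (fun t => (hlip t).lipschitzOnWith)
    (fun t => ⟨hsol t, trivial⟩) (fun t => ⟨hzero t, trivial⟩) (t₀ := t₀) (by simp [h₀, h₁])
  funext t
  exact congrArg Prod.fst (congrFun this t)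

end SecondOrder

theorem differentiable_deriv_of_contDiff_two {f : ℝ → ℝ} (hf : ContDiff ℝ 2 f) :
    Differentiable ℝ (deriv f) :=
  (ContDiff.iterate_deriv' 1 1 hf).differentiable one_ne_zero

namespace IsLPTW

variable {α₂ β₁ β₂ δ D v : ℝ} {M I : ℝ → ℝ}

theorem M_eq_zero (h : IsLPTW α₂ β₁ β₂ δ D v M I) (hv : 0 ≤ v) (z : ℝ) : M z = 0 := by
  have hanti : Antitone M := by
    refine antitone_of_deriv_deriv_add_mul_deriv_nonpos hv (h.smoothM.differentiable two_ne_zero)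
      (differentiable_deriv_of_contDiff_two h.smoothM) (fun z => ?_)
      ⟨0, forall_mem_range.mpr fun z => (h.rangeM z).1⟩
    have := mul_nonneg (mul_nonneg (h.rangeI z).1 (h.rangeM z).1) (sub_nonneg.mpr (h.rangeM z).2)
    linarith [h.odeM z]
  exact le_antisymm (hanti.ge_of_tendsto h.limM_bot z) (h.rangeM z).1

theorem I_pos (h : IsLPTW α₂ β₁ β₂ δ D v M I) (hα₂ : 0 < α₂) (hβ₂ : 0 < β₂) (hD : 0 < D)
    (hδ : 0 < δ) (hσ : 1 < sigmaP α₂ β₁ β₂) (hM : ∀ z, M z = 0) (z₀ : ℝ) : 0 < I z₀ := by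
  set L := bP α₂ β₁ β₂ * (sigmaP α₂ β₁ β₂ - 1)
  have hL : 0 < L := mul_pos (div_pos hβ₂ (by positivity)) (sub_pos.mpr hσ)
  set φ : ℝ → ℝ := fun x => -(aP α₂ β₁ β₂ * (L - x) / (α₂ * x + β₂)) / (δ * D)
  have hφ : ContinuousOn φ (Icc 0 1) := by
    refine ((ContinuousOn.div (by fun_prop) (by fun_prop) fun x hx => ?_).neg).div_const _
    have := hx.1
    positivity
  obtain ⟨C, hC⟩ := isCompact_Icc.exists_bound_of_continuousOn hφ
  have hode : ∀ t, deriv (deriv I) t = -(v / D) * deriv I t + φ (I t) * I t := fun t => by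
    have := h.odeI t
    have hden : 0 < α₂ * I t + β₂ := by have := (h.rangeI t).1; positivity
    simp only [fP, hM t, mul_zero, add_zero, sub_zero, mul_one] at this
    simp only [φ]
    field_simp
    linear_combination this
  by_contra! hI
  have hI₀ : I z₀ = 0 := le_antisymm hI (h.rangeI z₀).1
  have hI'₀ : deriv I z₀ = 0 :=
    IsLocalMin.deriv_eq_zero (.of_forall fun x => hI₀ ▸ (h.rangeI x).1)
  have hI_zero : I = 0 := eq_zero_of_deriv_deriv_eq_linear (h.smoothI.differentiable two_ne_zero)
    (differentiable_deriv_of_contDiff_two h.smoothI) (fun t => hC _ (h.rangeI t)) hode hI₀ hI'₀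
  have hlim := h.limI_bot
  rw [hI_zero] at hlim
  exact hL.ne' (tendsto_nhds_unique hlim tendsto_const_nhds)

end IsLPTW

theorem lptw_components_general (α₂ β₁ β₂ δ D v : ℝ)
    (hα₂ : 0 < α₂) (hβ₂ : 0 < β₂) (hD : 0 < D) (hδ : 0 < δ)
    (hσ : 1 < sigmaP α₂ β₁ β₂)
    (hv : 0 < v) (M I : ℝ → ℝ) (h : IsLPTW α₂ β₁ β₂ δ D v M I) :
    ∀ z : ℝ, M z = 0 ∧ 0 < I z :=
  fun z => ⟨h.M_eq_zero hv.le z, h.I_pos hα₂ hβ₂ hD hδ hσ (h.M_eq_zero hv.le) z⟩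

/-- Proposition 4.4: for `σ > 1`, an [LPTW] has identically vanishing mutant component and
strictly positive immune component. -/
theorem lptw_components (α₂ β₁ β₂ δ D v : ℝ)
    (hα₂ : 0 < α₂) (hβ₁ : 0 < β₁) (hβ₂ : 0 < β₂) (hD : 0 < D) (hδ : 0 < δ)
    (hσ : 1 < sigmaP α₂ β₁ β₂)
    (hv : 0 < v) (M I : ℝ → ℝ) (h : IsLPTW α₂ β₁ β₂ δ D v M I) :
    ∀ z : ℝ, M z = 0 ∧ 0 < I z :=
  lptw_components_general α₂ β₁ β₂ δ D v hα₂ hβ₂ hD hδ hσ hv M I h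
end
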